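/- arXiv:1509.02178 — 2 statements merged into one kernel-verified Lean document; each statement's English description precedes it below -/
import Mathlib

section
/- Fix t ∈ [0,1]. The function G(x, y, κ) = log(σ_{κ⁻}^{(1-t)} e^x + σ_{κ⁺}^{(t)} e^y), defined on ℝ² × C([0,1]) (with κ restricted so that the distortion coefficients are finite), is jointly convex, where κ⁻(s) = κ(1-s) and κ⁺ = κ. -/
/-!
With `F(u, v) = log (e^u + e^v)`, `G(x, y, κ) = F(x + log σ_{κ⁻}^{(1-t)}, y + log σ_{κ⁺}^{(t)})`.
`F` is convex (two-term Hölder inequality) and nondecreasing in each variable, so it suffices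
that `κ ↦ log σ_κ^{(t)}` is convex. For that, the weighted geometric mean
`w = 𝔰_{κ₀}^{1-l} 𝔰_{κ₁}^l` satisfies
`w'' + ((1 - l) κ₀ + l κ₁) w = -l (1 - l) (𝔰_{κ₀}'/𝔰_{κ₀} - 𝔰_{κ₁}'/𝔰_{κ₁})² w ≤ 0`,
so the Wronskian of `𝔰_{(1-l) κ₀ + l κ₁}` and `w` increases from its limit `0` at `0`.
Hence `𝔰_{(1-l) κ₀ + l κ₁} / w` is nondecreasing on `(0, 1]`, which is
`σ_{(1-l) κ₀ + l κ₁}^{(t)} ≤ (σ_{κ₀}^{(t)})^{1-l} (σ_{κ₁}^{(t)})^l`.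
-/

open Set

/-- `s` is the generalized sin-function for curvature `κ` on `[0, L]`. -/
def IsSinSolution (κ s s' : ℝ → ℝ) (L : ℝ) : Prop :=
  s 0 = 0 ∧ s' 0 = 1 ∧
    ∀ x ∈ Set.Icc (0:ℝ) L, HasDerivAt s (s' x) x ∧ HasDerivAt s' (-(κ x * s x)) x

open Filter Topology

lemma monotoneOn_of_forall_hasDerivAt_nonneg {D : Set ℝ} (hD : Convex ℝ D) {f f' : ℝ → ℝ}
    (hf : ∀ x ∈ D, HasDerivAt f (f' x) x) (hf' : ∀ x ∈ D, 0 ≤ f' x) : MonotoneOn f D :=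
  monotoneOn_of_hasDerivWithinAt_nonneg hD
    (fun x hx => (hf x hx).continuousAt.continuousWithinAt)
    (fun x hx => (hf x (interior_subset hx)).hasDerivWithinAt)
    (fun x hx => hf' x (interior_subset hx))

lemma MonotoneOn.le_of_tendsto_nhdsGT {f : ℝ → ℝ} {a b c : ℝ} (hf : MonotoneOn f (Ioc a b))
    (hc : Tendsto f (𝓝[>] a) (𝓝 c)) {x : ℝ} (hx : x ∈ Ioc a b) : c ≤ f x := by
  refine le_of_tendsto hc ?_
  filter_upwards [Ioc_mem_nhdsGT hx.1] with y hy
  exact hf ⟨hy.1, hy.2.trans hx.2⟩ hx hy.2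

def wronskian (u u' v v' : ℝ → ℝ) : ℝ → ℝ := fun y => u' y * v y - u y * v' y

lemma hasDerivAt_wronskian {u u' v v' : ℝ → ℝ} {u'' v'' x : ℝ} (hu : HasDerivAt u (u' x) x)
    (hu' : HasDerivAt u' u'' x) (hv : HasDerivAt v (v' x) x) (hv' : HasDerivAt v' v'' x) :
    HasDerivAt (wronskian u u' v v') (u'' * v x - u x * v'') x := by
  refine ((hu'.mul hv).sub (hu.mul hv')).congr_deriv ?_
  ring

lemma monotoneOn_div_of_wronskian_nonneg {D : Set ℝ} (hD : Convex ℝ D) {u u' v v' : ℝ → ℝ}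
    (hu : ∀ x ∈ D, HasDerivAt u (u' x) x) (hv : ∀ x ∈ D, HasDerivAt v (v' x) x)
    (hv₀ : ∀ x ∈ D, 0 < v x) (hW : ∀ x ∈ D, 0 ≤ wronskian u u' v v' x) :
    MonotoneOn (fun y => u y / v y) D :=
  monotoneOn_of_forall_hasDerivAt_nonneg hD
    (fun x hx => (hu x hx).div (hv x hx) (hv₀ x hx).ne')
    (fun x hx => div_nonneg (hW x hx) (sq_nonneg _))

lemma rpow_mul_rpow_add_rpow_mul_rpow_le {l a₀ a₁ b₀ b₁ : ℝ} (hl : l ∈ Icc (0:ℝ) 1)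
    (ha₀ : 0 ≤ a₀) (ha₁ : 0 ≤ a₁) (hb₀ : 0 ≤ b₀) (hb₁ : 0 ≤ b₁)
    (hA : 0 < a₀ + b₀) (hB : 0 < a₁ + b₁) :
    a₀ ^ (1 - l) * a₁ ^ l + b₀ ^ (1 - l) * b₁ ^ l ≤ (a₀ + b₀) ^ (1 - l) * (a₁ + b₁) ^ l := by
  set A := a₀ + b₀
  set B := a₁ + b₁
  -- normalize by `A` and `B`, then apply weighted AM-GM to each term
  have key : ∀ a b : ℝ, 0 ≤ a → 0 ≤ b →
      a ^ (1 - l) * b ^ l ≤ A ^ (1 - l) * B ^ l * ((1 - l) * (a / A) + l * (b / B)) := by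
    intro a b ha hb
    have hAB : 0 ≤ A ^ (1 - l) * B ^ l := by positivity
    calc a ^ (1 - l) * b ^ l = A ^ (1 - l) * B ^ l * ((a / A) ^ (1 - l) * (b / B) ^ l) := by
          rw [Real.div_rpow ha hA.le, Real.div_rpow hb hB.le]
          field_simp
      _ ≤ _ := mul_le_mul_of_nonneg_left (Real.geom_mean_le_arith_mean2_weighted
          (by linarith [hl.2]) hl.1 (by positivity) (by positivity) (by ring)) hAB
  have hsum : (1 - l) * (a₀ / A) + l * (a₁ / B) + ((1 - l) * (b₀ / A) + l * (b₁ / B)) = 1 := by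
    field_simp
    ring
  calc _ ≤ A ^ (1 - l) * B ^ l * ((1 - l) * (a₀ / A) + l * (a₁ / B)) +
        A ^ (1 - l) * B ^ l * ((1 - l) * (b₀ / A) + l * (b₁ / B)) :=
        add_le_add (key a₀ a₁ ha₀ ha₁) (key b₀ b₁ hb₀ hb₁)
    _ = A ^ (1 - l) * B ^ l := by rw [← mul_add, hsum, mul_one]

lemma log_add_le_of_le_rpow_mul_rpow {l a b a₀ a₁ b₀ b₁ : ℝ} (hl : l ∈ Icc (0:ℝ) 1)
    (ha₀ : 0 ≤ a₀) (ha₁ : 0 ≤ a₁) (hb₀ : 0 ≤ b₀) (hb₁ : 0 ≤ b₁)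
    (hab : 0 < a + b) (hA : 0 < a₀ + b₀) (hB : 0 < a₁ + b₁)
    (ha : a ≤ a₀ ^ (1 - l) * a₁ ^ l) (hb : b ≤ b₀ ^ (1 - l) * b₁ ^ l) :
    Real.log (a + b) ≤ (1 - l) * Real.log (a₀ + b₀) + l * Real.log (a₁ + b₁) := by
  calc Real.log (a + b) ≤ Real.log ((a₀ + b₀) ^ (1 - l) * (a₁ + b₁) ^ l) :=
        Real.log_le_log hab <| (add_le_add ha hb).trans <|
          rpow_mul_rpow_add_rpow_mul_rpow_le hl ha₀ ha₁ hb₀ hb₁ hA hB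
    _ = _ := by
      rw [Real.log_mul (Real.rpow_pos_of_pos hA _).ne' (Real.rpow_pos_of_pos hB _).ne',
        Real.log_rpow hA, Real.log_rpow hB]

lemma mul_exp_le_rpow_mul_rpow {l c c₀ c₁ x₀ x₁ : ℝ} (hc₀ : 0 ≤ c₀) (hc₁ : 0 ≤ c₁)
    (hc : c ≤ c₀ ^ (1 - l) * c₁ ^ l) :
    c * Real.exp ((1 - l) * x₀ + l * x₁) ≤
      (c₀ * Real.exp x₀) ^ (1 - l) * (c₁ * Real.exp x₁) ^ l := by
  have hexp : Real.exp ((1 - l) * x₀ + l * x₁) = Real.exp x₀ ^ (1 - l) * Real.exp x₁ ^ l := by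
    rw [Real.exp_add, mul_comm (1 - l), mul_comm l, Real.exp_mul, Real.exp_mul]
  rw [Real.mul_rpow hc₀ (Real.exp_pos x₀).le, Real.mul_rpow hc₁ (Real.exp_pos x₁).le, hexp]
  calc c * (Real.exp x₀ ^ (1 - l) * Real.exp x₁ ^ l)
      ≤ c₀ ^ (1 - l) * c₁ ^ l * (Real.exp x₀ ^ (1 - l) * Real.exp x₁ ^ l) :=
        mul_le_mul_of_nonneg_right hc (by positivity)
    _ = _ := by ring

namespace IsSinSolution

variable {κ s s' : ℝ → ℝ}

lemma hasDerivAt (h : IsSinSolution κ s s' 1) {x : ℝ} (hx : x ∈ Icc (0:ℝ) 1) :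
    HasDerivAt s (s' x) x :=
  (h.2.2 x hx).1

lemma hasDerivAt_deriv (h : IsSinSolution κ s s' 1) {x : ℝ} (hx : x ∈ Icc (0:ℝ) 1) :
    HasDerivAt s' (-(κ x * s x)) x :=
  (h.2.2 x hx).2

lemma tendsto_deriv_nhdsGT (h : IsSinSolution κ s s' 1) : Tendsto s' (𝓝[>] 0) (𝓝 1) := by
  simpa only [h.2.1] using
    ((h.hasDerivAt_deriv ⟨le_rfl, zero_le_one⟩).continuousAt.tendsto).mono_left
      nhdsWithin_le_nhds

lemma continuousAt_zero (h : IsSinSolution κ s s' 1) : ContinuousAt s 0 :=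
  (h.hasDerivAt ⟨le_rfl, zero_le_one⟩).continuousAt

lemma tendsto_div_self_nhdsGT (h : IsSinSolution κ s s' 1) :
    Tendsto (fun y => s y / y) (𝓝[>] 0) (𝓝 1) := by
  have hslope := hasDerivAt_iff_tendsto_slope.mp (h.hasDerivAt ⟨le_rfl, zero_le_one⟩)
  rw [h.2.1] at hslope
  refine (hslope.mono_left (nhdsWithin_mono _ fun y hy => ne_of_gt hy)).congr fun y => ?_
  simp [slope, h.1, div_eq_inv_mul]

lemma nonneg (h : IsSinSolution κ s s' 1) (hpos : ∀ r ∈ Ioc (0:ℝ) 1, 0 < s r) {x : ℝ}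
    (hx : x ∈ Icc (0:ℝ) 1) : 0 ≤ s x := by
  rcases hx.1.eq_or_lt with rfl | hx₀
  · exact h.1.ge
  · exact (hpos x ⟨hx₀, hx.2⟩).le

end IsSinSolution

lemma tendsto_div_nhdsGT_of_isSinSolution {κ₀ κ₁ s₀ s₀' s₁ s₁' : ℝ → ℝ}
    (h₀ : IsSinSolution κ₀ s₀ s₀' 1) (h₁ : IsSinSolution κ₁ s₁ s₁' 1)
    (hpos₀ : ∀ r ∈ Ioc (0:ℝ) 1, 0 < s₀ r) :
    Tendsto (fun y => s₁ y / s₀ y) (𝓝[>] 0) (𝓝 1) := by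
  have hlim := h₁.tendsto_div_self_nhdsGT.div h₀.tendsto_div_self_nhdsGT one_ne_zero
  rw [div_one] at hlim
  refine hlim.congr' ?_
  filter_upwards [Ioc_mem_nhdsGT zero_lt_one] with y hy
  have := (hpos₀ y hy).ne'
  have := hy.1.ne'
  simp only [Pi.div_apply]
  field_simp

/-- The paper's `σ_κ^{(t)}`, for `s = 𝔰_κ`. -/
noncomputable def distortionCoeff (s : ℝ → ℝ) (t : ℝ) : ℝ := s t / s 1

lemma distortionCoeff_nonneg {κ s s' : ℝ → ℝ} (h : IsSinSolution κ s s' 1)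
    (hpos : ∀ r ∈ Ioc (0:ℝ) 1, 0 < s r) {t : ℝ} (ht : t ∈ Icc (0:ℝ) 1) :
    0 ≤ distortionCoeff s t :=
  div_nonneg (h.nonneg hpos ht) (hpos 1 ⟨one_pos, le_rfl⟩).le

lemma distortionCoeff_mul_exp_add_pos {κm κp sm sm' sp sp' : ℝ → ℝ}
    (hm : IsSinSolution κm sm sm' 1) (hp : IsSinSolution κp sp sp' 1)
    (hmpos : ∀ r ∈ Ioc (0:ℝ) 1, 0 < sm r) (hppos : ∀ r ∈ Ioc (0:ℝ) 1, 0 < sp r)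
    {t : ℝ} (ht : t ∈ Icc (0:ℝ) 1) (u v : ℝ) :
    0 < distortionCoeff sm (1 - t) * Real.exp u + distortionCoeff sp t * Real.exp v := by
  have h1 : (1:ℝ) ∈ Ioc 0 1 := ⟨one_pos, le_rfl⟩
  have h1t : 1 - t ∈ Icc (0:ℝ) 1 := ⟨by linarith [ht.2], by linarith [ht.1]⟩
  rcases ht.2.lt_or_eq with ht₁ | rfl
  · exact add_pos_of_pos_of_nonneg
      (mul_pos (div_pos (hmpos _ ⟨by linarith, h1t.2⟩) (hmpos 1 h1)) (Real.exp_pos u))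
      (mul_nonneg (distortionCoeff_nonneg hp hppos ht) (Real.exp_pos v).le)
  · exact add_pos_of_nonneg_of_pos
      (mul_nonneg (distortionCoeff_nonneg hm hmpos h1t) (Real.exp_pos u).le)
      (mul_pos (div_pos (hppos 1 h1) (hppos 1 h1)) (Real.exp_pos v))

section GeomMix

variable (l : ℝ) (f f' g g' : ℝ → ℝ)

noncomputable def geomMix : ℝ → ℝ := fun y => f y ^ (1 - l) * g y ^ l

noncomputable def geomMixDeriv : ℝ → ℝ :=
  fun y => ((1 - l) * f' y / f y + l * g' y / g y) * geomMix l f g y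

variable {l f f' g g'}

lemma hasDerivAt_geomMix {x : ℝ} (hf : HasDerivAt f (f' x) x) (hg : HasDerivAt g (g' x) x)
    (hfx : 0 < f x) (hgx : 0 < g x) :
    HasDerivAt (geomMix l f g) (geomMixDeriv l f f' g g' x) x := by
  refine ((hf.rpow_const (Or.inl hfx.ne')).mul (hg.rpow_const (Or.inl hgx.ne'))).congr_deriv ?_
  rw [Real.rpow_sub_one hfx.ne', Real.rpow_sub_one hgx.ne']
  simp only [geomMixDeriv, geomMix]
  field_simp

/-- `geomMix l f g` is a supersolution for the interpolated curvature `(1 - l) a + l b`. -/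
lemma hasDerivAt_geomMixDeriv {x a b : ℝ} (hf : HasDerivAt f (f' x) x)
    (hf' : HasDerivAt f' (-(a * f x)) x) (hg : HasDerivAt g (g' x) x)
    (hg' : HasDerivAt g' (-(b * g x)) x) (hfx : 0 < f x) (hgx : 0 < g x) :
    HasDerivAt (geomMixDeriv l f f' g g')
      (-((1 - l) * a + l * b + l * (1 - l) * (f' x / f x - g' x / g x) ^ 2) *
        geomMix l f g x) x := by
  have hlogDeriv := ((hf'.const_mul (1 - l)).div hf hfx.ne').add
    ((hg'.const_mul l).div hg hgx.ne')
  refine (hlogDeriv.mul (hasDerivAt_geomMix hf hg hfx hgx)).congr_deriv ?_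
  simp only [geomMixDeriv, Pi.add_apply, Pi.div_apply]
  field_simp
  ring

lemma geomMix_pos {x : ℝ} (hfx : 0 < f x) (hgx : 0 < g x) : 0 < geomMix l f g x :=
  mul_pos (Real.rpow_pos_of_pos hfx _) (Real.rpow_pos_of_pos hgx _)

lemma geomMix_div_geomMix {x y : ℝ} (hfx : 0 ≤ f x) (hgx : 0 ≤ g x) (hfy : 0 < f y)
    (hgy : 0 < g y) :
    geomMix l f g x / geomMix l f g y = (f x / f y) ^ (1 - l) * (g x / g y) ^ l := by
  rw [Real.div_rpow hfx hfy.le, Real.div_rpow hgx hgy.le, geomMix, geomMix,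
    mul_div_mul_comm]

end GeomMix

section Comparison

variable {l : ℝ} {κ₀ κ₁ s₀ s₀' s₁ s₁' sl sl' : ℝ → ℝ}

lemma tendsto_geomMix_nhdsGT (hl : l ∈ Icc (0:ℝ) 1) (h₀ : IsSinSolution κ₀ s₀ s₀' 1)
    (h₁ : IsSinSolution κ₁ s₁ s₁' 1) : Tendsto (geomMix l s₀ s₁) (𝓝[>] 0) (𝓝 0) := by
  have hcont : ContinuousAt (geomMix l s₀ s₁) 0 :=
    ((Real.continuous_rpow_const (by linarith [hl.2])).continuousAt.comp
      h₀.continuousAt_zero).mul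
      ((Real.continuous_rpow_const hl.1).continuousAt.comp h₁.continuousAt_zero)
  have hzero : geomMix l s₀ s₁ 0 = 0 := by
    rcases eq_or_ne l 0 with rfl | hl₀
    · simp [geomMix, h₀.1]
    · simp [geomMix, h₁.1, Real.zero_rpow hl₀]
  simpa [hzero] using hcont.tendsto.mono_left nhdsWithin_le_nhds

lemma tendsto_wronskian_geomMix_nhdsGT {κ : ℝ → ℝ} (hl : l ∈ Icc (0:ℝ) 1)
    (h₀ : IsSinSolution κ₀ s₀ s₀' 1) (h₁ : IsSinSolution κ₁ s₁ s₁' 1)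
    (h : IsSinSolution κ sl sl' 1)
    (hpos₀ : ∀ r ∈ Ioc (0:ℝ) 1, 0 < s₀ r) (hpos₁ : ∀ r ∈ Ioc (0:ℝ) 1, 0 < s₁ r) :
    Tendsto (wronskian sl sl' (geomMix l s₀ s₁) (geomMixDeriv l s₀ s₀' s₁ s₁'))
      (𝓝[>] 0) (𝓝 0) := by
  -- the Wronskian is `(sl' - (1 - l) s₀' sl / s₀ - l s₁' sl / s₁) * geomMix l s₀ s₁`
  have hfactor : Tendsto (fun y => sl' y - ((1 - l) * s₀' y * (sl y / s₀ y) +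
      l * s₁' y * (sl y / s₁ y))) (𝓝[>] 0) (𝓝 0) := by
    have hlim := h.tendsto_deriv_nhdsGT.sub
      (((h₀.tendsto_deriv_nhdsGT.const_mul (1 - l)).mul
        (tendsto_div_nhdsGT_of_isSinSolution h₀ h hpos₀)).add
        ((h₁.tendsto_deriv_nhdsGT.const_mul l).mul
          (tendsto_div_nhdsGT_of_isSinSolution h₁ h hpos₁)))
    convert hlim using 2
    ring
  have hlim := hfactor.mul (tendsto_geomMix_nhdsGT hl h₀ h₁)
  rw [zero_mul] at hlim
  refine hlim.congr' ?_
  filter_upwards [Ioc_mem_nhdsGT zero_lt_one] with y hy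
  have := (hpos₀ y hy).ne'
  have := (hpos₁ y hy).ne'
  simp only [wronskian, geomMixDeriv]
  field_simp

lemma hasDerivAt_wronskian_geomMix (h₀ : IsSinSolution κ₀ s₀ s₀' 1)
    (h₁ : IsSinSolution κ₁ s₁ s₁' 1)
    (h : IsSinSolution (fun r => (1 - l) * κ₀ r + l * κ₁ r) sl sl' 1)
    (hpos₀ : ∀ r ∈ Ioc (0:ℝ) 1, 0 < s₀ r) (hpos₁ : ∀ r ∈ Ioc (0:ℝ) 1, 0 < s₁ r)
    {x : ℝ} (hx : x ∈ Ioc (0:ℝ) 1) :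
    HasDerivAt (wronskian sl sl' (geomMix l s₀ s₁) (geomMixDeriv l s₀ s₀' s₁ s₁'))
      (l * (1 - l) * sl x * geomMix l s₀ s₁ x * (s₀' x / s₀ x - s₁' x / s₁ x) ^ 2) x := by
  have hx' := Ioc_subset_Icc_self hx
  refine (hasDerivAt_wronskian (h.hasDerivAt hx') (h.hasDerivAt_deriv hx')
    (hasDerivAt_geomMix (h₀.hasDerivAt hx') (h₁.hasDerivAt hx') (hpos₀ x hx) (hpos₁ x hx))
    (hasDerivAt_geomMixDeriv (h₀.hasDerivAt hx') (h₀.hasDerivAt_deriv hx')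
      (h₁.hasDerivAt hx') (h₁.hasDerivAt_deriv hx') (hpos₀ x hx) (hpos₁ x hx))).congr_deriv ?_
  ring

lemma wronskian_geomMix_nonneg (hl : l ∈ Icc (0:ℝ) 1) (h₀ : IsSinSolution κ₀ s₀ s₀' 1)
    (h₁ : IsSinSolution κ₁ s₁ s₁' 1)
    (h : IsSinSolution (fun r => (1 - l) * κ₀ r + l * κ₁ r) sl sl' 1)
    (hpos₀ : ∀ r ∈ Ioc (0:ℝ) 1, 0 < s₀ r) (hpos₁ : ∀ r ∈ Ioc (0:ℝ) 1, 0 < s₁ r)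
    (hpos : ∀ r ∈ Ioc (0:ℝ) 1, 0 < sl r) {x : ℝ} (hx : x ∈ Ioc (0:ℝ) 1) :
    0 ≤ wronskian sl sl' (geomMix l s₀ s₁) (geomMixDeriv l s₀ s₀' s₁ s₁') x := by
  refine MonotoneOn.le_of_tendsto_nhdsGT ?_
    (tendsto_wronskian_geomMix_nhdsGT hl h₀ h₁ h hpos₀ hpos₁) hx
  refine monotoneOn_of_forall_hasDerivAt_nonneg (convex_Ioc 0 1)
    (fun y hy => hasDerivAt_wronskian_geomMix h₀ h₁ h hpos₀ hpos₁ hy) fun y hy => ?_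
  have := hpos y hy
  have := geomMix_pos (l := l) (hpos₀ y hy) (hpos₁ y hy)
  have : 0 ≤ l * (1 - l) := mul_nonneg hl.1 (by linarith [hl.2])
  positivity

theorem distortionCoeff_le_rpow_mul_rpow (hl : l ∈ Icc (0:ℝ) 1)
    (h₀ : IsSinSolution κ₀ s₀ s₀' 1) (h₁ : IsSinSolution κ₁ s₁ s₁' 1)
    (h : IsSinSolution (fun r => (1 - l) * κ₀ r + l * κ₁ r) sl sl' 1)
    (hpos₀ : ∀ r ∈ Ioc (0:ℝ) 1, 0 < s₀ r) (hpos₁ : ∀ r ∈ Ioc (0:ℝ) 1, 0 < s₁ r)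
    (hpos : ∀ r ∈ Ioc (0:ℝ) 1, 0 < sl r) {t : ℝ} (ht : t ∈ Icc (0:ℝ) 1) :
    distortionCoeff sl t ≤ distortionCoeff s₀ t ^ (1 - l) * distortionCoeff s₁ t ^ l := by
  rcases ht.1.eq_or_lt with rfl | ht₀
  · rw [distortionCoeff, h.1, zero_div]
    exact mul_nonneg (Real.rpow_nonneg (distortionCoeff_nonneg h₀ hpos₀ ht) _)
      (Real.rpow_nonneg (distortionCoeff_nonneg h₁ hpos₁ ht) _)
  have h1 : (1:ℝ) ∈ Ioc 0 1 := ⟨one_pos, le_rfl⟩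
  have htI : t ∈ Ioc (0:ℝ) 1 := ⟨ht₀, ht.2⟩
  have hw : ∀ x ∈ Ioc (0:ℝ) 1, 0 < geomMix l s₀ s₁ x := fun x hx =>
    geomMix_pos (hpos₀ x hx) (hpos₁ x hx)
  -- Sturm comparison: `sl / geomMix l s₀ s₁` is nondecreasing on `(0, 1]`
  have hmono := monotoneOn_div_of_wronskian_nonneg (convex_Ioc 0 1)
    (fun x hx => h.hasDerivAt (Ioc_subset_Icc_self hx))
    (fun x hx => hasDerivAt_geomMix (h₀.hasDerivAt (Ioc_subset_Icc_self hx))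
      (h₁.hasDerivAt (Ioc_subset_Icc_self hx)) (hpos₀ x hx) (hpos₁ x hx))
    hw (fun x hx => wronskian_geomMix_nonneg hl h₀ h₁ h hpos₀ hpos₁ hpos hx)
  have hratio := hmono htI h1 ht.2
  rw [div_le_div_iff₀ (hw t htI) (hw 1 h1)] at hratio
  rw [distortionCoeff, distortionCoeff, distortionCoeff,
    ← geomMix_div_geomMix (hpos₀ t htI).le (hpos₁ t htI).le (hpos₀ 1 h1) (hpos₁ 1 h1),
    div_le_div_iff₀ (hpos 1 h1) (hw 1 h1)]
  linarith [mul_comm (sl 1) (geomMix l s₀ s₁ t)]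

end Comparison

theorem G_jointly_convex_general (t : ℝ) (ht : t ∈ Icc (0:ℝ) 1)
    (l : ℝ) (hl : l ∈ Icc (0:ℝ) 1)
    (x₀ y₀ x₁ y₁ : ℝ)
    (κ₀ κ₁ : ℝ → ℝ)
    (sp₀ sp₀' sm₀ sm₀' sp₁ sp₁' sm₁ sm₁' spl spl' sml sml' : ℝ → ℝ)
    (hsp₀ : IsSinSolution κ₀ sp₀ sp₀' 1)
    (hsm₀ : IsSinSolution (fun r => κ₀ (1 - r)) sm₀ sm₀' 1)
    (hsp₁ : IsSinSolution κ₁ sp₁ sp₁' 1)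
    (hsm₁ : IsSinSolution (fun r => κ₁ (1 - r)) sm₁ sm₁' 1)
    (hspl : IsSinSolution (fun r => (1 - l) * κ₀ r + l * κ₁ r) spl spl' 1)
    (hsml : IsSinSolution (fun r => (1 - l) * κ₀ (1 - r) + l * κ₁ (1 - r)) sml sml' 1)
    (hp₀ : ∀ r ∈ Ioc (0:ℝ) 1, 0 < sp₀ r) (hm₀ : ∀ r ∈ Ioc (0:ℝ) 1, 0 < sm₀ r)
    (hp₁ : ∀ r ∈ Ioc (0:ℝ) 1, 0 < sp₁ r) (hm₁ : ∀ r ∈ Ioc (0:ℝ) 1, 0 < sm₁ r)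
    (hpl : ∀ r ∈ Ioc (0:ℝ) 1, 0 < spl r) (hml : ∀ r ∈ Ioc (0:ℝ) 1, 0 < sml r) :
    Real.log (sml (1 - t) / sml 1 * Real.exp ((1 - l) * x₀ + l * x₁) +
        spl t / spl 1 * Real.exp ((1 - l) * y₀ + l * y₁)) ≤
      (1 - l) * Real.log (sm₀ (1 - t) / sm₀ 1 * Real.exp x₀ + sp₀ t / sp₀ 1 * Real.exp y₀) +
        l * Real.log (sm₁ (1 - t) / sm₁ 1 * Real.exp x₁ + sp₁ t / sp₁ 1 * Real.exp y₁) := by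
  have h1t : 1 - t ∈ Icc (0:ℝ) 1 := ⟨by linarith [ht.2], by linarith [ht.1]⟩
  have hσm₀ := distortionCoeff_nonneg hsm₀ hm₀ h1t
  have hσm₁ := distortionCoeff_nonneg hsm₁ hm₁ h1t
  have hσp₀ := distortionCoeff_nonneg hsp₀ hp₀ ht
  have hσp₁ := distortionCoeff_nonneg hsp₁ hp₁ ht
  exact log_add_le_of_le_rpow_mul_rpow hl
    (mul_nonneg hσm₀ (Real.exp_pos x₀).le) (mul_nonneg hσm₁ (Real.exp_pos x₁).le)
    (mul_nonneg hσp₀ (Real.exp_pos y₀).le) (mul_nonneg hσp₁ (Real.exp_pos y₁).le)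
    (distortionCoeff_mul_exp_add_pos hsml hspl hml hpl ht _ _)
    (distortionCoeff_mul_exp_add_pos hsm₀ hsp₀ hm₀ hp₀ ht _ _)
    (distortionCoeff_mul_exp_add_pos hsm₁ hsp₁ hm₁ hp₁ ht _ _)
    (mul_exp_le_rpow_mul_rpow hσm₀ hσm₁
      (distortionCoeff_le_rpow_mul_rpow hl hsm₀ hsm₁ hsml hm₀ hm₁ hml h1t))
    (mul_exp_le_rpow_mul_rpow hσp₀ hσp₁
      (distortionCoeff_le_rpow_mul_rpow hl hsp₀ hsp₁ hspl hp₀ hp₁ hpl ht))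

/-- Joint convexity of `G(x, y, κ) = log(σ_{κ⁻}^{(1-t)} e^x + σ_{κ⁺}^{(t)} e^y)` in `(x, y, κ)`:
along any segment from `(x₀, y₀, κ₀)` to `(x₁, y₁, κ₁)` (with the distortion coefficients
expressed through the corresponding sin-solutions, all finite), the convexity inequality holds.
Here `κ⁻(s) = κ(1-s)`, `κ⁺ = κ`, and `σ_κ^{(t)} = 𝔰_κ(t)/𝔰_κ(1)`. -/
theorem G_jointly_convex (t : ℝ) (ht : t ∈ Icc (0:ℝ) 1)
    (l : ℝ) (hl : l ∈ Icc (0:ℝ) 1)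
    (x₀ y₀ x₁ y₁ : ℝ)
    (κ₀ κ₁ : ℝ → ℝ) (hκ₀ : ContinuousOn κ₀ (Icc 0 1)) (hκ₁ : ContinuousOn κ₁ (Icc 0 1))
    (sp₀ sp₀' sm₀ sm₀' sp₁ sp₁' sm₁ sm₁' spl spl' sml sml' : ℝ → ℝ)
    (hsp₀ : IsSinSolution κ₀ sp₀ sp₀' 1)
    (hsm₀ : IsSinSolution (fun r => κ₀ (1 - r)) sm₀ sm₀' 1)
    (hsp₁ : IsSinSolution κ₁ sp₁ sp₁' 1)
    (hsm₁ : IsSinSolution (fun r => κ₁ (1 - r)) sm₁ sm₁' 1)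
    (hspl : IsSinSolution (fun r => (1 - l) * κ₀ r + l * κ₁ r) spl spl' 1)
    (hsml : IsSinSolution (fun r => (1 - l) * κ₀ (1 - r) + l * κ₁ (1 - r)) sml sml' 1)
    (hp₀ : ∀ r ∈ Ioc (0:ℝ) 1, 0 < sp₀ r) (hm₀ : ∀ r ∈ Ioc (0:ℝ) 1, 0 < sm₀ r)
    (hp₁ : ∀ r ∈ Ioc (0:ℝ) 1, 0 < sp₁ r) (hm₁ : ∀ r ∈ Ioc (0:ℝ) 1, 0 < sm₁ r)
    (hpl : ∀ r ∈ Ioc (0:ℝ) 1, 0 < spl r) (hml : ∀ r ∈ Ioc (0:ℝ) 1, 0 < sml r) :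
    Real.log (sml (1 - t) / sml 1 * Real.exp ((1 - l) * x₀ + l * x₁) +
        spl t / spl 1 * Real.exp ((1 - l) * y₀ + l * y₁)) ≤
      (1 - l) * Real.log (sm₀ (1 - t) / sm₀ 1 * Real.exp x₀ + sp₀ t / sp₀ 1 * Real.exp y₀) +
        l * Real.log (sm₁ (1 - t) / sm₁ 1 * Real.exp x₁ + sp₁ t / sp₁ 1 * Real.exp y₁) :=
  G_jointly_convex_general t ht l hl x₀ y₀ x₁ y₁ κ₀ κ₁ sp₀ sp₀' sm₀ sm₀' sp₁ sp₁' sm₁ sm₁' spl spl'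
    sml sml' hsp₀ hsm₀ hsp₁ hsm₁ hspl hsml hp₀ hm₀ hp₁ hm₁ hpl hml
end

section
/- Let κ : [0,θ] → ℝ be continuous, 𝔰_κ > 0 on (0,θ], N > 0, and consider the rescaled coefficients σ_{κ/N}^{(t)}(θ). Define v_N(t) = N[σ_{(κ/N)⁻}^{(1-t)}(θ) + σ_{(κ/N)⁺}^{(t)}(θ) - 1]. Then as N → ∞, v_N converges pointwise on [0,1] to v(t) = ∫₀¹ g(s,t) κ(sθ)θ² ds, the solution of v'' + κ(tθ)θ² = 0 with v(0)=v(1)=0. -/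
/-!
Write `s_N` for the generalized sine with curvature `k / N` on `[0, L]`. Its Volterra form
`s_N r = r - (1/N) ∫₀ʳ (r - u) k(u) s_N(u) du` first bounds `s_N` uniformly, then gives
`s_N r = r + O(1/N)` uniformly, and feeding this back in,
`N (s_N r - r) → -∫₀ʳ (r - u) k(u) u du`. Consequently the ratio `s_N(tL) / s_N(L)` equals
`t + L² ∫₀¹ G(s, t) k(sL) ds / N + o(1/N)` with `G(s, t) = t s (1 - s) - (t - s)⁺ s`, and the
kernels of the two reflected ratios add up to the Green function:
`G(s, t) + G(1 - s, 1 - t) = min(s, t) (1 - max(s, t))`.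
-/

open Set Filter

open intervalIntegral Topology

theorem abs_integral_sub_mul_le {g : ℝ → ℝ} {r C : ℝ} (hr : 0 ≤ r)
    (hg : ∀ u ∈ Ioc 0 r, |g u| ≤ C) : |∫ u in (0:ℝ)..r, (r - u) * g u| ≤ r ^ 2 * C := by
  have := norm_integral_le_of_norm_le_const (a := 0) (b := r) (C := r * C)
    (f := fun u => (r - u) * g u) fun u hu => by
      rw [uIoc_of_le hr] at hu
      rw [Real.norm_eq_abs, abs_mul, abs_of_nonneg (sub_nonneg.2 hu.2)]
      calc (r - u) * |g u| ≤ r * |g u| := by gcongr; linarith [hu.1]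
        _ ≤ r * C := by gcongr; exact hg u hu
  rw [Real.norm_eq_abs, sub_zero, abs_of_nonneg hr] at this
  linarith

namespace IsSinSolution

variable {q s s' : ℝ → ℝ} {L : ℝ}

theorem continuousOn (h : IsSinSolution q s s' L) : ContinuousOn s (Icc 0 L) :=
  fun x hx => (h.2.2 x hx).1.continuousAt.continuousWithinAt

theorem continuousOn_deriv (h : IsSinSolution q s s' L) : ContinuousOn s' (Icc 0 L) :=
  fun x hx => (h.2.2 x hx).2.continuousAt.continuousWithinAt

/-- By parts, `∫₀ʳ (r - u) s''(u) du = s r - r s'(0) - s 0`. -/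
theorem eq_sub_integral (h : IsSinSolution q s s' L) (hq : ContinuousOn q (Icc 0 L)) {r : ℝ}
    (hr : r ∈ Icc 0 L) : s r = r - ∫ u in (0:ℝ)..r, (r - u) * (q u * s u) := by
  have hs := h.continuousOn
  have hs' := h.continuousOn_deriv
  obtain ⟨h0, h1, hode⟩ := h
  have hsub : uIcc 0 r ⊆ Icc 0 L := by
    rw [uIcc_of_le hr.1]; exact Icc_subset_Icc_right hr.2
  have hparts := integral_mul_deriv_eq_deriv_mul (u := fun u => r - u) (u' := fun _ => -1)
    (fun x _ => (hasDerivAt_id x).const_sub r) (fun x hx => (hode x (hsub hx)).2)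
    intervalIntegrable_const
    ((hq.mul hs).neg.mono hsub).intervalIntegrable
  have hftc := integral_eq_sub_of_hasDerivAt (fun x hx => (hode x (hsub hx)).1)
    (hs'.mono hsub).intervalIntegrable
  simp only [mul_neg, integral_neg, neg_one_mul, sub_self, zero_mul, sub_zero, h1] at hparts
  linarith

theorem abs_sub_le (h : IsSinSolution q s s' L) (hq : ContinuousOn q (Icc 0 L)) {ε B : ℝ}
    (hqε : ∀ u ∈ Icc 0 L, |q u| ≤ ε) (hB : ∀ u ∈ Icc 0 L, |s u| ≤ B) {r : ℝ}
    (hr : r ∈ Icc 0 L) : |s r - r| ≤ r ^ 2 * (ε * B) := by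
  rw [h.eq_sub_integral hq hr, sub_sub_cancel_left, abs_neg]
  refine abs_integral_sub_mul_le hr.1 fun u hu => ?_
  have hu' : u ∈ Icc 0 L := ⟨hu.1.le, hu.2.trans hr.2⟩
  rw [abs_mul]
  exact mul_le_mul (hqε u hu') (hB u hu') (abs_nonneg _) ((abs_nonneg _).trans (hqε u hu'))

/-- For weak curvature the maximum `S` of `|s|` satisfies `S ≤ L + L²εS ≤ L + S/2`. -/
theorem abs_le_two_mul (h : IsSinSolution q s s' L) (hq : ContinuousOn q (Icc 0 L)) {ε : ℝ}
    (hqε : ∀ u ∈ Icc 0 L, |q u| ≤ ε) (hε : 2 * ε * L ^ 2 ≤ 1) {r : ℝ} (hr : r ∈ Icc 0 L) :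
    |s r| ≤ 2 * L := by
  have hL : 0 ≤ L := hr.1.trans hr.2
  obtain ⟨x, hx, hmax⟩ :=
    isCompact_Icc.exists_isMaxOn (nonempty_Icc.2 hL) h.continuousOn.abs
  have hmax' : ∀ u ∈ Icc 0 L, |s u| ≤ |s x| := fun u hu => hmax hu
  have hε0 : 0 ≤ ε := (abs_nonneg _).trans (hqε 0 ⟨le_rfl, hL⟩)
  have hx2 : x ^ 2 ≤ L ^ 2 := pow_le_pow_left₀ hx.1 hx.2 2
  have hdev := h.abs_sub_le hq hqε hmax' hx
  have hS : |s x| ≤ L + L ^ 2 * (ε * |s x|) := by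
    calc |s x| ≤ |x| + |s x - x| := by linarith [abs_sub_abs_le_abs_sub (s x) x]
      _ ≤ L + L ^ 2 * (ε * |s x|) := by
        rw [abs_of_nonneg hx.1]
        gcongr
        · exact hx.2
        · exact hdev.trans (by gcongr)
  nlinarith [hmax' r hr, abs_nonneg (s x)]

theorem abs_sub_self_le (h : IsSinSolution q s s' L) (hq : ContinuousOn q (Icc 0 L)) {ε : ℝ}
    (hqε : ∀ u ∈ Icc 0 L, |q u| ≤ ε) (hε : 2 * ε * L ^ 2 ≤ 1) {r : ℝ} (hr : r ∈ Icc 0 L) :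
    |s r - r| ≤ 2 * ε * L ^ 3 := by
  have hε0 : 0 ≤ ε := (abs_nonneg _).trans (hqε r hr)
  calc |s r - r| ≤ r ^ 2 * (ε * (2 * L)) :=
        h.abs_sub_le hq hqε (fun _ hu => h.abs_le_two_mul hq hqε hε hu) hr
    _ ≤ L ^ 2 * (ε * (2 * L)) := by
        have hL : 0 ≤ L := hr.1.trans hr.2
        gcongr
        exacts [hr.1, hr.2]
    _ = 2 * ε * L ^ 3 := by ring

theorem mul_sub_self_eq {k : ℝ → ℝ} {N : ℝ} (h : IsSinSolution (fun r => k r / N) s s' L)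
    (hk : ContinuousOn k (Icc 0 L)) (hN : N ≠ 0) {r : ℝ} (hr : r ∈ Icc 0 L) :
    N * (s r - r) = -∫ u in (0:ℝ)..r, (r - u) * (k u * s u) := by
  have hdiv : ∫ u in (0:ℝ)..r, (r - u) * (k u / N * s u) =
      (∫ u in (0:ℝ)..r, (r - u) * (k u * s u)) / N := by
    rw [← integral_div]
    exact integral_congr fun u _ => by ring
  rw [h.eq_sub_integral (hk.div_const N) hr, hdiv]
  field_simp
  ring

end IsSinSolution

theorem tendsto_mul_sub_of_isSinSolution {k : ℝ → ℝ} {s s' : ℝ → ℝ → ℝ} {L : ℝ}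
    (hk : ContinuousOn k (Icc 0 L))
    (hs : ∀ᶠ N in atTop, IsSinSolution (fun r => k r / N) (s N) (s' N) L) {r : ℝ}
    (hr : r ∈ Icc 0 L) :
    Tendsto (fun N => N * (s N r - r)) atTop (𝓝 (-∫ u in (0:ℝ)..r, (r - u) * (k u * u))) := by
  obtain ⟨M, hM⟩ := isCompact_Icc.exists_bound_of_continuousOn hk
  simp only [Real.norm_eq_abs] at hM
  have hL : 0 ≤ L := hr.1.trans hr.2
  have hM0 : 0 ≤ M := (abs_nonneg _).trans (hM 0 ⟨le_rfl, hL⟩)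
  have hsub : uIcc 0 r ⊆ Icc 0 L := by
    rw [uIcc_of_le hr.1]; exact Icc_subset_Icc_right hr.2
  rw [← tendsto_sub_nhds_zero_iff]
  refine squeeze_zero_norm' (a := fun N => 2 * M ^ 2 * L ^ 5 * N⁻¹) ?_ ?_
  · filter_upwards [hs, eventually_gt_atTop 0, eventually_ge_atTop (2 * M * L ^ 2)]
      with N hsN hN hNM
    have hqM : ∀ u ∈ Icc 0 L, |k u / N| ≤ M / N := fun u hu => by
      rw [abs_div, abs_of_pos hN]; exact div_le_div_of_nonneg_right (hM u hu) hN.le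
    have hε : 2 * (M / N) * L ^ 2 ≤ 1 := by
      rw [mul_div_assoc', div_mul_eq_mul_div, div_le_one hN]; exact hNM
    have hi : ∀ f : ℝ → ℝ, ContinuousOn f (Icc 0 L) →
        IntervalIntegrable (fun u => (r - u) * (k u * f u)) MeasureTheory.volume 0 r :=
      fun f hf => (((continuousOn_const.sub continuousOn_id).mul (hk.mul hf)).mono
        hsub).intervalIntegrable
    rw [hsN.mul_sub_self_eq hk hN.ne' hr, Real.norm_eq_abs, neg_sub_neg,
      ← integral_sub (f := fun u => (r - u) * (k u * u)) (hi _ continuousOn_id)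
        (hi _ hsN.continuousOn)]
    simp only [← mul_sub]
    calc _ ≤ r ^ 2 * (M * (2 * (M / N) * L ^ 3)) :=
          abs_integral_sub_mul_le hr.1 fun u hu => by
            have hu' : u ∈ Icc 0 L := ⟨hu.1.le, hu.2.trans hr.2⟩
            rw [abs_mul, abs_sub_comm]
            exact mul_le_mul (hM u hu') (hsN.abs_sub_self_le (hk.div_const N) hqM hε hu')
              (abs_nonneg _) hM0
      _ ≤ L ^ 2 * (M * (2 * (M / N) * L ^ 3)) := by
          gcongr
          exacts [hr.1, hr.2]
      _ = 2 * M ^ 2 * L ^ 5 * N⁻¹ := by ring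
  · have := (tendsto_inv_atTop_zero (𝕜 := ℝ)).const_mul (2 * M ^ 2 * L ^ 5)
    rwa [mul_zero] at this

theorem tendsto_mul_div_sub {a b : ℝ → ℝ} {t L A B : ℝ} (hL : L ≠ 0)
    (ha : Tendsto (fun N => N * (a N - t * L)) atTop (𝓝 A))
    (hb : Tendsto (fun N => N * (b N - L)) atTop (𝓝 B)) :
    Tendsto (fun N => N * (a N / b N - t)) atTop (𝓝 ((A - t * B) / L)) := by
  have hbL : Tendsto b atTop (𝓝 L) := by
    have := (hb.mul (tendsto_inv_atTop_zero (𝕜 := ℝ))).const_add L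
    rw [mul_zero, add_zero] at this
    refine this.congr' ?_
    filter_upwards [eventually_ne_atTop 0] with N hN
    field_simp
    ring
  refine ((ha.sub (hb.const_mul t)).div hbL hL).congr' ?_
  filter_upwards [hbL.eventually_ne hL] with N hN
  simp only [Pi.div_apply]
  field_simp
  ring

theorem integral_sub_mul_eq_integral_max_mul {f : ℝ → ℝ} {r L : ℝ}
    (hf : IntervalIntegrable f MeasureTheory.volume 0 L) (hr : r ∈ Icc 0 L) :
    ∫ u in (0:ℝ)..r, (r - u) * f u = ∫ u in (0:ℝ)..L, max (r - u) 0 * f u := by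
  have hmax : Continuous fun u : ℝ => max (r - u) 0 := by fun_prop
  have hf0 : IntervalIntegrable f MeasureTheory.volume 0 r := hf.mono_set (by
    rw [uIcc_of_le hr.1, uIcc_of_le (hr.1.trans hr.2)]; exact Icc_subset_Icc_right hr.2)
  have hf1 : IntervalIntegrable f MeasureTheory.volume r L := hf.mono_set (by
    rw [uIcc_of_le hr.2, uIcc_of_le (hr.1.trans hr.2)]; exact Icc_subset_Icc_left hr.1)
  rw [← integral_add_adjacent_intervals (hf0.continuousOn_mul hmax.continuousOn)
    (hf1.continuousOn_mul hmax.continuousOn)]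
  have hvanish : ∫ u in r..L, max (r - u) 0 * f u = 0 := by
    rw [← integral_zero]
    refine integral_congr fun u hu => ?_
    rw [uIcc_of_le hr.2] at hu
    simp [max_eq_right (sub_nonpos.2 hu.1)]
  rw [hvanish, add_zero]
  refine integral_congr fun u hu => ?_
  rw [uIcc_of_le hr.1] at hu
  simp [max_eq_left (sub_nonneg.2 hu.2)]

def oneSidedGreen (s t : ℝ) : ℝ := (t * (1 - s) - max (t - s) 0) * s

theorem oneSidedGreen_add_oneSidedGreen_one_sub (s t : ℝ) :
    oneSidedGreen s t + oneSidedGreen (1 - s) (1 - t) = min s t * (1 - max s t) := by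
  unfold oneSidedGreen
  rcases le_total s t with hst | hts
  · rw [max_eq_left (sub_nonneg.2 hst), max_eq_right (by linarith), min_eq_left hst,
      max_eq_right hst]
    ring
  · rw [max_eq_right (sub_nonpos.2 hts), max_eq_left (by linarith), min_eq_right hts,
      max_eq_left hts]
    ring

theorem integral_oneSidedGreen_mul {k : ℝ → ℝ} {L t : ℝ} (hL : 0 < L)
    (hk : ContinuousOn k (Icc 0 L)) (ht : t ∈ Icc 0 1) :
    L ^ 2 * ∫ s in (0:ℝ)..1, oneSidedGreen s t * k (s * L) =
      ((-∫ u in (0:ℝ)..t * L, (t * L - u) * (k u * u)) -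
        t * -∫ u in (0:ℝ)..L, (L - u) * (k u * u)) / L := by
  have hf : ContinuousOn (fun u => k u * u) (Icc 0 L) := hk.mul continuousOn_id
  have hcont : ContinuousOn (fun u => (L - u) * (k u * u)) (Icc 0 L) :=
    (continuousOn_const.sub continuousOn_id).mul hf
  have hmaxcont : ContinuousOn (fun u => max (t * L - u) 0 * (k u * u)) (Icc 0 L) :=
    (Continuous.continuousOn (by fun_prop)).mul hf
  have hvar : ∀ s : ℝ, (t * (L - s * L) - max (t * L - s * L) 0) * (k (s * L) * (s * L)) =
      L ^ 2 * (oneSidedGreen s t * k (s * L)) := fun s => by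
    rw [← sub_mul, ← zero_mul L, ← max_mul_of_nonneg _ _ hL.le, oneSidedGreen]
    ring
  rw [integral_sub_mul_eq_integral_max_mul (hf.intervalIntegrable_of_Icc hL.le)
      ⟨mul_nonneg ht.1 hL.le, mul_le_of_le_one_left hL.le ht.2⟩,
    mul_neg, sub_neg_eq_add, neg_add_eq_sub, ← integral_const_mul t, ← integral_sub
      ((hcont.intervalIntegrable_of_Icc hL.le).const_mul t)
      (hmaxcont.intervalIntegrable_of_Icc hL.le)]
  have := integral_comp_mul_right
    (fun u => (t * (L - u) - max (t * L - u) 0) * (k u * u)) hL.ne' (a := 0) (b := 1)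
  simp only [hvar, integral_const_mul, zero_mul, one_mul, smul_eq_mul] at this
  rw [this, inv_mul_eq_div]
  congr 1
  exact integral_congr fun u _ => by ring

theorem integral_oneSidedGreen_reflect_add {f : ℝ → ℝ} (hf : ContinuousOn f (Icc 0 1)) (t : ℝ) :
    (∫ s in (0:ℝ)..1, oneSidedGreen s (1 - t) * f (1 - s)) +
        ∫ s in (0:ℝ)..1, oneSidedGreen s t * f s =
      ∫ s in (0:ℝ)..1, min s t * (1 - max s t) * f s := by
  have hint : ∀ g : ℝ → ℝ, Continuous g →
      IntervalIntegrable (fun s => g s * f s) MeasureTheory.volume 0 1 := fun g hg =>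
    (hg.continuousOn.mul hf).intervalIntegrable_of_Icc zero_le_one
  have hreflect := integral_comp_sub_left (a := 0) (b := 1)
    (fun s => oneSidedGreen (1 - s) (1 - t) * f s) 1
  simp only [sub_sub_cancel, sub_zero, sub_self] at hreflect
  rw [hreflect, ← integral_add
    (hint (fun s => oneSidedGreen (1 - s) (1 - t)) (by unfold oneSidedGreen; fun_prop))
    (hint (oneSidedGreen · t) (by unfold oneSidedGreen; fun_prop))]
  refine integral_congr fun s _ => ?_
  rw [← oneSidedGreen_add_oneSidedGreen_one_sub s t]
  ring

theorem tendsto_mul_div_sub_of_isSinSolution {k : ℝ → ℝ} {s s' : ℝ → ℝ → ℝ} {L t : ℝ}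
    (hL : 0 < L) (hk : ContinuousOn k (Icc 0 L))
    (hs : ∀ᶠ N in atTop, IsSinSolution (fun r => k r / N) (s N) (s' N) L) (ht : t ∈ Icc 0 1) :
    Tendsto (fun N => N * (s N (t * L) / s N L - t)) atTop
      (𝓝 (L ^ 2 * ∫ z in (0:ℝ)..1, oneSidedGreen z t * k (z * L))) := by
  rw [integral_oneSidedGreen_mul hL hk ht]
  exact tendsto_mul_div_sub hL.ne'
    (tendsto_mul_sub_of_isSinSolution hk hs
      ⟨mul_nonneg ht.1 hL.le, mul_le_of_le_one_left hL.le ht.2⟩)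
    (tendsto_mul_sub_of_isSinSolution hk hs ⟨hL.le, le_rfl⟩)

/-- As `N → ∞`, `v_N(t) = N[σ_{(κ/N)⁻}^{(1-t)}(θ) + σ_{(κ/N)⁺}^{(t)}(θ) - 1]` converges
pointwise on `[0,1]` to `v(t) = ∫₀¹ g(s,t) κ(sθ)θ² ds`, the solution of `v'' + κ(tθ)θ² = 0`
with `v(0) = v(1) = 0`. -/
theorem vN_tendsto_green (θ : ℝ) (hθ : 0 < θ)
    (κ : ℝ → ℝ) (hκ : ContinuousOn κ (Icc 0 θ))
    (sp sp' sm sm' : ℝ → ℝ → ℝ)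
    (hsp : ∀ N > (0:ℝ), IsSinSolution (fun r => κ r / N) (sp N) (sp' N) θ ∧
      ∀ r ∈ Ioc (0:ℝ) θ, 0 < sp N r)
    (hsm : ∀ N > (0:ℝ), IsSinSolution (fun r => κ (θ - r) / N) (sm N) (sm' N) θ ∧
      ∀ r ∈ Ioc (0:ℝ) θ, 0 < sm N r) :
    ∀ t ∈ Icc (0:ℝ) 1,
      Tendsto (fun N : ℝ => N * (sm N ((1 - t) * θ) / sm N θ + sp N (t * θ) / sp N θ - 1))
        atTop
        (nhds (∫ s in (0:ℝ)..1, (min s t * (1 - max s t)) * κ (s * θ) * θ ^ 2)) := by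
  intro t ht
  have hκ' : ContinuousOn (fun r => κ (θ - r)) (Icc 0 θ) :=
    hκ.comp (continuousOn_const.sub continuousOn_id) fun r hr =>
      ⟨sub_nonneg.2 hr.2, sub_le_self _ hr.1⟩
  have hκθ : ContinuousOn (fun s => κ (s * θ)) (Icc 0 1) :=
    hκ.comp (continuousOn_id.mul continuousOn_const) fun s hs =>
      ⟨mul_nonneg hs.1 hθ.le, mul_le_of_le_one_left hθ.le hs.2⟩
  have hm := tendsto_mul_div_sub_of_isSinSolution hθ hκ'
    ((eventually_gt_atTop 0).mono fun N hN => (hsm N hN).1)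
    ⟨sub_nonneg.2 ht.2, sub_le_self _ ht.1⟩
  have hp := tendsto_mul_div_sub_of_isSinSolution hθ hκ
    ((eventually_gt_atTop 0).mono fun N hN => (hsp N hN).1) ht
  have hlim := integral_oneSidedGreen_reflect_add hκθ t
  simp only [sub_mul, one_mul] at hlim
  have hsum := hm.add hp
  rw [← mul_add, hlim] at hsum
  rw [integral_mul_const, mul_comm _ (θ ^ 2)]
  exact hsum.congr fun N => by ring
end
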